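/- arXiv:1811.07131 — 2 statements merged into one kernel-verified Lean document; each statement's English description precedes it below -/
import Mathlib

section
/- Assume δ_{k0+1} < 1/√(k0+1). Let g : (0,∞) → (0,∞) satisfy lim_{σ→0⁺} g(σ) = ∞ and lim_{σ→0⁺} σ g(σ) = 0. Let k̂(σ) be the smallest k ≥ 0 with ‖r^k‖₂ ≤ σ g(σ) (setting k̂(σ) = n if no such k ≤ n exists). Then OMP with the stopping rule ‖r^k‖₂ ≤ σ g(σ) is high SNR consistent: lim_{σ²→0} P(S_{k̂(σ)} = S) = 1. -/
open MeasureTheory ProbabilityTheory Filter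
open scoped ENNReal NNReal

noncomputable section

namespace RRTPaper

variable {n p : ℕ}

/-- The support of a coefficient vector as a `Finset`. -/
def suppF {p : ℕ} (β : Fin p → ℝ) : Finset (Fin p) :=
  Finset.univ.filter fun j => β j ≠ 0

/-- `β_min`: the smallest absolute value of `β` on its support. -/
def betaMin {p : ℕ} (β : Fin p → ℝ) : ℝ :=
  sInf ((fun j => |β j|) '' {j | β j ≠ 0})

/-- `β_max`: the largest absolute value of `β` on its support. -/
def betaMax {p : ℕ} (β : Fin p → ℝ) : ℝ :=
  sSup ((fun j => |β j|) '' {j | β j ≠ 0})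

/-- The ℓ2 norm of a coefficient vector. -/
def l2norm {p : ℕ} (b : Fin p → ℝ) : ℝ := Real.sqrt (∑ j, (b j) ^ 2)

/-- The design matrix (given by its columns `X j ∈ ℝⁿ`) applied to a coefficient
vector: `Xb = ∑ j, b j • X j`. -/
def applyX (X : Fin p → EuclideanSpace ℝ (Fin n)) (b : Fin p → ℝ) :
    EuclideanSpace ℝ (Fin n) := ∑ j, b j • X j

/-- The set of admissible restricted isometry constants of order `s`:
`δ ≥ 0` such that `(1−δ)‖b‖₂² ≤ ‖Xb‖₂² ≤ (1+δ)‖b‖₂²` for every `b` with at most `s`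
nonzero entries. -/
def ripSet (X : Fin p → EuclideanSpace ℝ (Fin n)) (s : ℕ) : Set ℝ :=
  {δ : ℝ | 0 ≤ δ ∧ ∀ b : Fin p → ℝ, (suppF b).card ≤ s →
    (1 - δ) * (l2norm b) ^ 2 ≤ ‖applyX X b‖ ^ 2 ∧
      ‖applyX X b‖ ^ 2 ≤ (1 + δ) * (l2norm b) ^ 2}

/-- The restricted isometry constant `δ_s` of order `s` (the smallest admissible `δ`). -/
def RIC (X : Fin p → EuclideanSpace ℝ (Fin n)) (s : ℕ) : ℝ := sInf (ripSet X s)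

/-- The OMP support estimate `S_k` after `k` iterations, given the sequence `t` of
selected indices (`t k` is the index selected at iteration `k+1`). -/
def ompSupport {p : ℕ} (t : ℕ → Fin p) (k : ℕ) : Finset (Fin p) :=
  (Finset.range k).image t

/-- The OMP residual `r^k = y − P_k y`, where `P_k` is the orthogonal projection onto
the span of the columns indexed by `S_k`. -/
def ompResidual (X : Fin p → EuclideanSpace ℝ (Fin n)) (y : EuclideanSpace ℝ (Fin n))
    (t : ℕ → Fin p) (k : ℕ) : EuclideanSpace ℝ (Fin n) :=
  y - ↑(Submodule.orthogonalProjectionOnto (Submodule.span ℝ (X '' ↑(ompSupport t k))) y)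

/-- `t` is a valid OMP selection sequence for design `X` and observation `y`:
at every iteration the selected index maximizes the absolute correlation with the
current residual. -/
def IsOMP (X : Fin p → EuclideanSpace ℝ (Fin n)) (y : EuclideanSpace ℝ (Fin n))
    (t : ℕ → Fin p) : Prop :=
  ∀ k : ℕ, ∀ j : Fin p,
    |(inner ℝ (X j) (ompResidual X y t k) : ℝ)| ≤
      |(inner ℝ (X (t k)) (ompResidual X y t k) : ℝ)|

/-- The residual ratio statistic `RR(k) = ‖r^k‖₂ / ‖r^{k−1}‖₂`. -/
def resRatio (X : Fin p → EuclideanSpace ℝ (Fin n)) (y : EuclideanSpace ℝ (Fin n))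
    (t : ℕ → Fin p) (k : ℕ) : ℝ :=
  ‖ompResidual X y t k‖ / ‖ompResidual X y t (k - 1)‖

/-- `k_min`: the first `1 ≤ k ≤ k_max` with `S ⊆ S_k` (`⊤ = ∞` if there is none). -/
def kmin {p : ℕ} (t : ℕ → Fin p) (β : Fin p → ℝ) (kmax : ℕ) : ℕ∞ :=
  sInf ((fun k : ℕ => (k : ℕ∞)) ''
    {k | 1 ≤ k ∧ k ≤ kmax ∧ suppF β ⊆ ompSupport t k})

/-- The Beta function `B(a,b)`. -/
def betaFun (a b : ℝ) : ℝ := Real.Gamma a * Real.Gamma b / Real.Gamma (a + b)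

/-- The CDF of the Beta(a,b) distribution. -/
def betaCDF (a b x : ℝ) : ℝ :=
  (1 / betaFun a b) * ∫ u in (0:ℝ)..x, u ^ (a - 1) * (1 - u) ^ (b - 1)

/-- The inverse of the Beta(a,b) CDF on (0,1) (as a generalized inverse). -/
def betaICDF (a b z : ℝ) : ℝ := sInf {x : ℝ | 0 ≤ x ∧ z ≤ betaCDF a b x}

/-- The residual ratio threshold `Γ_RRT^α(k)`. -/
def GammaRRT (n p kmax : ℕ) (α : ℝ) (k : ℕ) : ℝ :=
  Real.sqrt (betaICDF (((n : ℝ) - k) / 2) (1 / 2)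
    (α / ((kmax : ℝ) * ((p : ℝ) - k + 1))))

/-- `k_RRT = max{1 ≤ k ≤ k_max : RR(k) < Γ_RRT^α(k)}` (`0`, giving `S_RRT = ∅`,
if the set is empty). -/
def kRRT (X : Fin p → EuclideanSpace ℝ (Fin n)) (y : EuclideanSpace ℝ (Fin n))
    (t : ℕ → Fin p) (kmax : ℕ) (α : ℝ) : ℕ :=
  WithBot.unbotD 0 (((Finset.Icc 1 kmax).filter fun k =>
    resRatio X y t k < GammaRRT n p kmax α k).max)

/-- `k_RRM`: the smallest minimizer of `RR(k)` over `1 ≤ k ≤ k_max`. -/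
def kRRM (X : Fin p → EuclideanSpace ℝ (Fin n)) (y : EuclideanSpace ℝ (Fin n))
    (t : ℕ → Fin p) (kmax : ℕ) : ℕ :=
  sInf {k | k ∈ Finset.Icc 1 kmax ∧
    ∀ j ∈ Finset.Icc 1 kmax, resRatio X y t k ≤ resRatio X y t j}

/-- `min_{1 ≤ k ≤ k_max} RR(k)`. -/
def minRR (X : Fin p → EuclideanSpace ℝ (Fin n)) (y : EuclideanSpace ℝ (Fin n))
    (t : ℕ → Fin p) (kmax : ℕ) : ℝ :=
  sInf (resRatio X y t '' Set.Icc 1 kmax)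

/-- The adaptive RRT parameter `α* = min(PFD_finite, (min_k RR(k))^q)`. -/
def alphaStar (X : Fin p → EuclideanSpace ℝ (Fin n)) (y : EuclideanSpace ℝ (Fin n))
    (t : ℕ → Fin p) (kmax : ℕ) (PFD q : ℝ) : ℝ :=
  min PFD (minRR X y t kmax ^ q)

/-- `k_RRTA`: RRT with the adapted parameter `α*`. -/
def kRRTA (X : Fin p → EuclideanSpace ℝ (Fin n)) (y : EuclideanSpace ℝ (Fin n))
    (t : ℕ → Fin p) (kmax : ℕ) (PFD q : ℝ) : ℕ :=
  kRRT X y t kmax (alphaStar X y t kmax PFD q)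

/-- `ε_omp` from Lemma 1 of the paper. -/
def epsOMP (X : Fin p → EuclideanSpace ℝ (Fin n)) (β : Fin p → ℝ) (k0 : ℕ) : ℝ :=
  betaMin β * Real.sqrt (1 - RIC X (k0 + 1)) *
    (1 - Real.sqrt ((k0 : ℝ) + 1) * RIC X (k0 + 1)) /
    (1 + Real.sqrt (1 - RIC X (k0 + 1) ^ 2) - Real.sqrt ((k0 : ℝ) + 1) * RIC X (k0 + 1))

/-- `ε_σ = σ √(n + 2 √(n log n))`. -/
def epsSigma (n : ℕ) (σ : ℝ) : ℝ :=
  σ * Real.sqrt ((n : ℝ) + 2 * Real.sqrt ((n : ℝ) * Real.log (n : ℝ)))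

/-- The distribution of the noise vector `w ~ N(0, σ² Iₙ)` on `ℝⁿ`. -/
def noise (n : ℕ) (σ : ℝ) : Measure (EuclideanSpace ℝ (Fin n)) :=
  (Measure.pi fun _ : Fin n => gaussianReal 0 ⟨σ ^ 2, sq_nonneg σ⟩).map
    (MeasurableEquiv.toLp 2 (Fin n → ℝ))


open Classical in
/-- The smallest `k` with `r k ≤ c`, defaulting to `n` if no such `k ≤ n` exists. -/
def stoppedIter (r : ℕ → ℝ) (c : ℝ) (n : ℕ) : ℕ :=
  if ({k | k ≤ n ∧ r k ≤ c}).Nonempty then sInf {k | k ≤ n ∧ r k ≤ c} else n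

/-!
If `δ_{k0+1} < 1/√(k0+1)`, then for every proper subset `A` of the support `S` the noiseless
residual `(I - P_A) Xβ` equals `Xu` for some `u ≠ 0` supported on `S`, and testing the RIP on
`u + t eⱼ` shows that some column in `S` is strictly more correlated with it than every column
outside `S`. These finitely many strict inequalities are open conditions, so they survive every
perturbation of norm at most some `ε > 0`, which we also take below half the norm of each such
residual. If `‖w‖ ≤ τ < ε`, OMP therefore adds a new index of `S` at each of its first `k0` steps,
with `‖r^k‖ > 2ε - ‖w‖ > τ` before step `k0` and `‖r^{k0}‖ ≤ ‖w‖ ≤ τ`, so the stopping rule with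
`τ = σ g(σ)` returns `S`. Finally `P(‖w‖ > σ g(σ)) = P(‖z‖ > g(σ))` for a standard Gaussian `z`,
which tends to `0` because `g → ∞`.
-/

open scoped RealInnerProductSpace Topology

section RIP

variable {n p : ℕ} {X : Fin p → EuclideanSpace ℝ (Fin n)}

lemma mem_suppF {b : Fin p → ℝ} {j : Fin p} : j ∈ suppF b ↔ b j ≠ 0 := by
  simp [suppF]

lemma notMem_suppF {b : Fin p → ℝ} {j : Fin p} : j ∉ suppF b ↔ b j = 0 := by
  simp [suppF]

lemma l2norm_sq (b : Fin p → ℝ) : l2norm b ^ 2 = ∑ j, b j ^ 2 :=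
  Real.sq_sqrt (Finset.sum_nonneg fun _ _ => sq_nonneg _)

lemma l2norm_sq_pos {b : Fin p → ℝ} (hb : b ≠ 0) : 0 < l2norm b ^ 2 := by
  obtain ⟨j, hj⟩ := Function.ne_iff.1 hb
  rw [l2norm_sq]
  exact Finset.sum_pos' (fun i _ => sq_nonneg _) ⟨j, Finset.mem_univ _, sq_pos_of_ne_zero hj⟩

lemma applyX_eq_linearCombination : applyX X = Fintype.linearCombination ℝ X := by
  ext b : 1
  rw [Fintype.linearCombination_apply, applyX]

lemma applyX_finsupp (l : Fin p →₀ ℝ) :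
    applyX X l = Finsupp.linearCombination ℝ X l := by
  rw [Finsupp.linearCombination_apply, Finsupp.sum_fintype _ _ fun i => zero_smul ℝ (X i),
    applyX]

lemma suppF_subset_of_mem_supported {l : Fin p →₀ ℝ} {A : Finset (Fin p)}
    (hl : l ∈ Finsupp.supported ℝ ℝ (↑A : Set (Fin p))) : suppF l ⊆ A := fun _ hi =>
  Finset.mem_coe.1 <| (Finsupp.mem_supported ℝ l).1 hl <| Finsupp.mem_support_iff.2 <|
    mem_suppF.1 hi

lemma norm_applyX_sq_le (b : Fin p → ℝ) :
    ‖applyX X b‖ ^ 2 ≤ (∑ j, ‖X j‖ ^ 2) * l2norm b ^ 2 := by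
  have htri : ‖applyX X b‖ ≤ ∑ j, |b j| * ‖X j‖ := by
    refine (norm_sum_le _ _).trans_eq (Finset.sum_congr rfl fun j _ => ?_)
    rw [norm_smul, Real.norm_eq_abs]
  calc ‖applyX X b‖ ^ 2 ≤ (∑ j, |b j| * ‖X j‖) ^ 2 := by gcongr
    _ ≤ (∑ j, |b j| ^ 2) * ∑ j, ‖X j‖ ^ 2 := Finset.sum_mul_sq_le_sq_mul_sq _ _ _
    _ = (∑ j, ‖X j‖ ^ 2) * l2norm b ^ 2 := by simp only [sq_abs, l2norm_sq, mul_comm]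

lemma one_add_sum_norm_sq_mem_ripSet (X : Fin p → EuclideanSpace ℝ (Fin n)) (s : ℕ) :
    1 + ∑ j, ‖X j‖ ^ 2 ∈ ripSet X s := by
  have hC : 0 ≤ ∑ j, ‖X j‖ ^ 2 := by positivity
  refine ⟨by positivity, fun b _ => ⟨?_, ?_⟩⟩
  · nlinarith [sq_nonneg (l2norm b), sq_nonneg ‖applyX X b‖]
  · nlinarith [norm_applyX_sq_le (X := X) b, sq_nonneg (l2norm b)]

lemma isClosed_ripSet (X : Fin p → EuclideanSpace ℝ (Fin n)) (s : ℕ) :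
    IsClosed (ripSet X s) := by
  have : ripSet X s = Set.Ici 0 ∩ ⋂ (b : Fin p → ℝ) (_ : (suppF b).card ≤ s),
      {δ : ℝ | (1 - δ) * l2norm b ^ 2 ≤ ‖applyX X b‖ ^ 2 ∧
        ‖applyX X b‖ ^ 2 ≤ (1 + δ) * l2norm b ^ 2} := by
    ext δ
    simp only [ripSet, Set.mem_ofPred_eq, Set.mem_inter_iff, Set.mem_iInter, Set.mem_Ici]
  rw [this]
  refine isClosed_Ici.inter (isClosed_iInter fun b => isClosed_iInter fun _ => ?_)
  exact (isClosed_le (by fun_prop : Continuous fun δ : ℝ => (1 - δ) * l2norm b ^ 2)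
    continuous_const).inter
      (isClosed_le continuous_const (by fun_prop : Continuous fun δ : ℝ => (1 + δ) * l2norm b ^ 2))

lemma RIC_mem_ripSet (X : Fin p → EuclideanSpace ℝ (Fin n)) (s : ℕ) : RIC X s ∈ ripSet X s :=
  (isClosed_ripSet X s).csInf_mem ⟨_, one_add_sum_norm_sq_mem_ripSet X s⟩ ⟨0, fun _ hδ => hδ.1⟩

variable {δ : ℝ} {s : ℕ}

lemma applyX_ne_zero_of_mem_ripSet (hδ : δ ∈ ripSet X s) (hδ1 : δ < 1) {b : Fin p → ℝ}
    (hb : (suppF b).card ≤ s) (hb0 : b ≠ 0) : applyX X b ≠ 0 := by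
  intro h
  have := (hδ.2 b hb).1
  rw [h, norm_zero] at this
  nlinarith [l2norm_sq_pos hb0]

lemma card_le_of_mem_ripSet (hδ : δ ∈ ripSet X s) (hδ1 : δ < 1) {S : Finset (Fin p)}
    (hS : S.card ≤ s) : S.card ≤ n := by
  have hli : LinearIndepOn ℝ X (↑S : Set (Fin p)) := by
    refine linearIndepOn_iff.2 fun l hl hl0 => ?_
    have hsupp := suppF_subset_of_mem_supported hl
    by_contra hne
    refine applyX_ne_zero_of_mem_ripSet hδ hδ1 ((Finset.card_le_card hsupp).trans hS) ?_ ?_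
    · exact fun h => hne (DFunLike.coe_injective h)
    · rw [applyX_finsupp, hl0]
  simpa using hli.fintype_card_le_finrank

end RIP

section Gap

variable {n p : ℕ} {X : Fin p → EuclideanSpace ℝ (Fin n)} {δ : ℝ} {s : ℕ}

lemma applyX_eq_sum_of_suppF_subset {u : Fin p → ℝ} {S : Finset (Fin p)} (hu : suppF u ⊆ S) :
    applyX X u = ∑ i ∈ S, u i • X i := by
  refine (Finset.sum_subset (Finset.subset_univ S) fun i _ hi => ?_).symm
  rw [notMem_suppF.1 fun h => hi (hu h), zero_smul]

lemma sq_le_mul_of_forall_quadratic_nonneg {a b c : ℝ}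
    (h : ∀ t, 0 ≤ a * t ^ 2 + 2 * b * t + c) : b ^ 2 ≤ a * c := by
  have := discrim_le_zero (a := a) (b := 2 * b) (c := c) fun t => (h t).trans_eq (by ring)
  rw [discrim] at this
  linarith

/-- The RIP on `u + t eⱼ` for all `t`, read as two quadratics in `t` that never go negative. -/
lemma inner_sq_le_of_mem_ripSet {j : Fin p} (hXj : ‖X j‖ = 1) (hδ : δ ∈ ripSet X (s + 1))
    {u : Fin p → ℝ} (hu : (suppF u).card ≤ s) (huj : u j = 0) :
    ⟪X j, applyX X u⟫ ^ 2 ≤ δ * (‖applyX X u‖ ^ 2 - (1 - δ) * l2norm u ^ 2) ∧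
      ⟪X j, applyX X u⟫ ^ 2 ≤ δ * ((1 + δ) * l2norm u ^ 2 - ‖applyX X u‖ ^ 2) := by
  set c := ⟪X j, applyX X u⟫
  have hrip : ∀ t : ℝ, (1 - δ) * (l2norm u ^ 2 + t ^ 2) ≤ ‖applyX X u‖ ^ 2 + 2 * t * c + t ^ 2 ∧
      ‖applyX X u‖ ^ 2 + 2 * t * c + t ^ 2 ≤ (1 + δ) * (l2norm u ^ 2 + t ^ 2) := by
    intro t
    have hsupp : suppF (u + Pi.single j t) ⊆ insert j (suppF u) := by
      intro i hi
      rcases eq_or_ne i j with rfl | hij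
      · exact Finset.mem_insert_self _ _
      · refine Finset.mem_insert_of_mem (mem_suppF.2 ?_)
        simpa [Pi.single_apply, hij] using mem_suppF.1 hi
    have hcard : (suppF (u + Pi.single j t)).card ≤ s + 1 :=
      (Finset.card_le_card hsupp).trans ((Finset.card_insert_le _ _).trans (by omega))
    have happly : applyX X (u + Pi.single j t) = applyX X u + t • X j := by
      rw [applyX_eq_linearCombination, map_add, Fintype.linearCombination_apply_single]
    have hl2 : l2norm (u + Pi.single j t) ^ 2 = l2norm u ^ 2 + t ^ 2 := by
      have hsq : ∀ i, (u i + (Pi.single j t : Fin p → ℝ) i) ^ 2 =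
          u i ^ 2 + (Pi.single j (t ^ 2) : Fin p → ℝ) i := by
        intro i
        rcases eq_or_ne i j with rfl | hij
        · simp [huj]
        · simp [hij]
      simp only [l2norm_sq, Pi.add_apply, hsq, Finset.sum_add_distrib, Finset.sum_pi_single',
        Finset.mem_univ, if_true]
    have hnorm : ‖applyX X u + t • X j‖ ^ 2 = ‖applyX X u‖ ^ 2 + 2 * t * c + t ^ 2 := by
      rw [norm_add_sq_real, norm_smul, real_inner_smul_right, real_inner_comm, hXj,
        Real.norm_eq_abs, mul_one, sq_abs]
      ring
    simpa only [happly, hl2, hnorm] using hδ.2 _ hcard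
  constructor
  · exact sq_le_mul_of_forall_quadratic_nonneg fun t => by nlinarith [(hrip t).1]
  · rw [← neg_sq]
    exact sq_le_mul_of_forall_quadratic_nonneg fun t => by nlinarith [(hrip t).2]

/-- The scalar core of the recovery condition `δ_{s+1} < 1/√(s+1)`, for `m = ‖u‖²`,
`q = ‖Xu‖²` and `c = ⟪Xⱼ, Xu⟫`. -/
lemma mul_sq_lt_sq_of_rip {s δ m q c : ℝ} (hs : 0 ≤ s) (hδ : 0 ≤ δ) (hδs : δ ^ 2 * (s + 1) < 1)
    (hm : 0 < m) (hlo : (1 - δ) * m ≤ q)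
    (hc₁ : c ^ 2 ≤ δ * (q - (1 - δ) * m)) (hc₂ : c ^ 2 ≤ δ * ((1 + δ) * m - q)) :
    s * m * c ^ 2 < q ^ 2 := by
  have hδ1 : δ < 1 := by nlinarith
  have hq : 0 < q := lt_of_lt_of_le (by nlinarith) hlo
  -- `d` is the RIP slack on the side of `m` where `q` lies; `δ q² - (1 - δ²) m d` then equals
  -- `(1 ∓ δ)² m (δ m - d) + δ d² ≥ 0`.
  obtain ⟨d, hcd, hdq⟩ : ∃ d, c ^ 2 ≤ δ * d ∧ (1 - δ ^ 2) * m * d ≤ δ * q ^ 2 := by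
    rcases le_total q m with hqm | hmq
    · refine ⟨q - (1 - δ) * m, hc₁, ?_⟩
      nlinarith [mul_nonneg (mul_nonneg (sq_nonneg (1 - δ)) hm.le) (sub_nonneg.2 hqm),
        mul_nonneg hδ (sq_nonneg (q - (1 - δ) * m))]
    · refine ⟨(1 + δ) * m - q, hc₂, ?_⟩
      nlinarith [mul_nonneg (mul_nonneg (sq_nonneg (1 + δ)) hm.le) (sub_nonneg.2 hmq),
        mul_nonneg hδ (sq_nonneg ((1 + δ) * m - q))]
  rcases (sq_nonneg c).eq_or_lt with hc0 | hc0
  · rw [← hc0, mul_zero]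
    positivity
  have hδd : 0 < δ * d := hc0.trans_le hcd
  have hd : 0 < d := pos_of_mul_pos_right hδd hδ
  refine lt_of_mul_lt_mul_left ?_ hδ
  calc δ * (s * m * c ^ 2) ≤ s * δ ^ 2 * m * d := by
        nlinarith [mul_le_mul_of_nonneg_left hcd (by positivity : 0 ≤ δ * s * m)]
    _ < (1 - δ ^ 2) * m * d := by nlinarith [mul_pos hm hd]
    _ ≤ δ * q ^ 2 := hdq

def SupportLeads (X : Fin p → EuclideanSpace ℝ (Fin n)) (S : Finset (Fin p))
    (r : EuclideanSpace ℝ (Fin n)) : Prop :=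
  ∃ i ∈ S, 0 < |⟪X i, r⟫| ∧ ∀ j ∉ S, |⟪X j, r⟫| < |⟪X i, r⟫|

lemma isOpen_setOf_supportLeads (X : Fin p → EuclideanSpace ℝ (Fin n)) (S : Finset (Fin p)) :
    IsOpen {r | SupportLeads X S r} := by
  refine isOpen_iff_mem_nhds.2 fun r ⟨i, hi, hpos, hlt⟩ => ?_
  have hcont : ∀ j, Continuous fun r : EuclideanSpace ℝ (Fin n) => |⟪X j, r⟫| :=
    fun j => by fun_prop
  have hout : ∀ j, ∀ᶠ r' in 𝓝 r, j ∉ S → |⟪X j, r'⟫| < |⟪X i, r'⟫| := by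
    intro j
    by_cases hj : j ∈ S
    · exact Eventually.of_forall fun _ h => absurd hj h
    · exact (((hcont j).tendsto r).eventually_lt ((hcont i).tendsto r) (hlt j hj)).mono
        fun _ h _ => h
  filter_upwards [tendsto_const_nhds.eventually_lt ((hcont i).tendsto r) hpos,
    eventually_all.2 hout] with r' hpos' hout' using ⟨i, hi, hpos', hout'⟩

lemma supportLeads_applyX (hX : ∀ j, ‖X j‖ = 1) (hδ : δ ∈ ripSet X (s + 1))
    (hδs : δ ^ 2 * (s + 1) < 1) {S : Finset (Fin p)} (hS : S.card ≤ s) {u : Fin p → ℝ}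
    (hu : suppF u ⊆ S) (hu0 : u ≠ 0) : SupportLeads X S (applyX X u) := by
  set r := applyX X u
  have hsu : (suppF u).card ≤ s := (Finset.card_le_card hu).trans hS
  have hrip := hδ.2 u (hsu.trans s.le_succ)
  have hm := l2norm_sq_pos hu0
  have hδ1 : δ < 1 := by nlinarith [hδ.1]
  have hq : 0 < ‖r‖ ^ 2 := lt_of_lt_of_le (by nlinarith) hrip.1
  have hS0 : S.Nonempty := by
    obtain ⟨i, hi⟩ := Function.ne_iff.1 hu0
    exact ⟨i, hu (mem_suppF.2 hi)⟩
  obtain ⟨i₀, hi₀, hmax⟩ := S.exists_max_image (fun i => |⟪X i, r⟫|) hS0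
  set b := ∑ i ∈ S, |u i|
  have hqb : ‖r‖ ^ 2 ≤ b * |⟪X i₀, r⟫| := by
    calc ‖r‖ ^ 2 = ∑ i ∈ S, u i * ⟪X i, r⟫ := by
          rw [← real_inner_self_eq_norm_sq]
          nth_rewrite 1 [show r = ∑ i ∈ S, u i • X i from applyX_eq_sum_of_suppF_subset hu]
          simp only [sum_inner, real_inner_smul_left]
      _ ≤ ∑ i ∈ S, |u i| * |⟪X i₀, r⟫| := Finset.sum_le_sum fun i hi =>
          ((le_abs_self _).trans_eq (abs_mul _ _)).trans
            (mul_le_mul_of_nonneg_left (hmax i hi) (abs_nonneg _))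
      _ = b * |⟪X i₀, r⟫| := (Finset.sum_mul _ _ _).symm
  have hb : b ^ 2 ≤ s * l2norm u ^ 2 := by
    calc b ^ 2 ≤ S.card * ∑ i ∈ S, |u i| ^ 2 := sq_sum_le_card_mul_sum_sq
      _ ≤ s * ∑ i, u i ^ 2 := by
          gcongr
          simpa only [sq_abs] using Finset.sum_le_sum_of_subset_of_nonneg
            (Finset.subset_univ S) fun i _ _ => sq_nonneg (u i)
      _ = s * l2norm u ^ 2 := by rw [l2norm_sq]
  have hb0 : 0 < b := pos_of_mul_pos_left (hq.trans_le hqb) (abs_nonneg _)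
  refine ⟨i₀, hi₀, pos_of_mul_pos_right (hq.trans_le hqb) hb0.le, fun j hj => ?_⟩
  obtain ⟨hc₁, hc₂⟩ := inner_sq_le_of_mem_ripSet (hX j) hδ hsu (notMem_suppF.1 fun h => hj (hu h))
  have hsm := mul_sq_lt_sq_of_rip s.cast_nonneg hδ.1 hδs hm hrip.1 hc₁ hc₂
  have hbc : b * |⟪X j, r⟫| < ‖r‖ ^ 2 := by
    refine lt_of_pow_lt_pow_left₀ 2 hq.le ?_
    rw [mul_pow, sq_abs]
    nlinarith [sq_nonneg ⟪X j, r⟫]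
  exact lt_of_mul_lt_mul_left (hbc.trans_le hqb) hb0.le

end Gap

section OMP

variable {n p : ℕ} {X : Fin p → EuclideanSpace ℝ (Fin n)} {β : Fin p → ℝ}

/-- The paper's `I - P_A`. -/
def residual (X : Fin p → EuclideanSpace ℝ (Fin n)) (A : Finset (Fin p)) :
    EuclideanSpace ℝ (Fin n) →L[ℝ] EuclideanSpace ℝ (Fin n) :=
  (Submodule.span ℝ (X '' ↑A))ᗮ.starProjection

lemma ompResidual_eq_residual (X : Fin p → EuclideanSpace ℝ (Fin n))
    (y : EuclideanSpace ℝ (Fin n)) (t : ℕ → Fin p) (k : ℕ) :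
    ompResidual X y t k = residual X (ompSupport t k) y := by
  rw [ompResidual, residual, Submodule.starProjection_orthogonal_val,
    Submodule.coe_orthogonalProjectionOnto_apply]

lemma inner_residual_eq_zero {A : Finset (Fin p)} {j : Fin p} (hj : j ∈ A)
    (y : EuclideanSpace ℝ (Fin n)) : ⟪X j, residual X A y⟫ = 0 :=
  Submodule.inner_right_of_mem_orthogonal
    (Submodule.subset_span (Set.mem_image_of_mem X (Finset.mem_coe.2 hj)))
    (Submodule.starProjection_apply_mem _ y)

lemma norm_residual_le (A : Finset (Fin p)) (y : EuclideanSpace ℝ (Fin n)) :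
    ‖residual X A y‖ ≤ ‖y‖ :=
  Submodule.norm_starProjection_apply_le _ y

lemma residual_applyX_suppF : residual X (suppF β) (applyX X β) = 0 := by
  refine Submodule.starProjection_orthogonal_apply_eq_zero ?_
  rw [applyX_eq_sum_of_suppF_subset subset_rfl]
  exact Submodule.sum_mem _ fun i hi =>
    Submodule.smul_mem _ _ (Submodule.subset_span ⟨i, hi, rfl⟩)

lemma exists_residual_applyX_eq {A : Finset (Fin p)} (hA : A ⊆ suppF β) :
    ∃ u, suppF u ⊆ suppF β ∧ (∀ i ∉ A, u i = β i) ∧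
      residual X A (applyX X β) = applyX X u := by
  obtain ⟨l, hl, hlP⟩ := (Finsupp.mem_span_image_iff_linearCombination ℝ).1
    ((Submodule.span ℝ (X '' ↑A)).starProjection_apply_mem (applyX X β))
  have hlA : ∀ i ∉ A, l i = 0 := fun i hi =>
    notMem_suppF.1 fun h => hi (suppF_subset_of_mem_supported hl h)
  refine ⟨β - l, fun i hi => ?_, fun i hi => by simp [hlA i hi], ?_⟩
  · by_contra hiβ
    exact mem_suppF.1 hi (by simp [notMem_suppF.1 hiβ, hlA i fun h => hiβ (hA h)])
  · rw [residual, Submodule.starProjection_orthogonal_val, ← hlP, ← applyX_finsupp,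
      applyX_eq_linearCombination, map_sub]

def RecoveryMargin (X : Fin p → EuclideanSpace ℝ (Fin n)) (β : Fin p → ℝ) (ε : ℝ) : Prop :=
  ∀ A ∈ (suppF β).ssubsets,
    (∀ e, ‖e‖ ≤ ε → SupportLeads X (suppF β) (residual X A (applyX X β) + e)) ∧
      2 * ε < ‖residual X A (applyX X β)‖

variable {δ : ℝ} {s : ℕ}

lemma exists_recoveryMargin (hX : ∀ j, ‖X j‖ = 1) (hδ : δ ∈ ripSet X (s + 1))
    (hδs : δ ^ 2 * (s + 1) < 1) (hβ : (suppF β).card ≤ s) : ∃ ε > 0, RecoveryMargin X β ε := by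
  have hδ1 : δ < 1 := by nlinarith [hδ.1]
  have hleads : ∀ A ∈ (suppF β).ssubsets, SupportLeads X (suppF β) (residual X A (applyX X β)) ∧
      residual X A (applyX X β) ≠ 0 := by
    intro A hA
    have hAS := Finset.mem_ssubsets.1 hA
    obtain ⟨i, hiβ, hiA⟩ := Finset.exists_of_ssubset hAS
    obtain ⟨u, hu, huβ, hr⟩ := exists_residual_applyX_eq (X := X) hAS.subset
    have hu0 : u ≠ 0 := fun h => mem_suppF.1 hiβ (by rw [← huβ i hiA, h, Pi.zero_apply])
    rw [hr]
    exact ⟨supportLeads_applyX hX hδ hδs hβ hu hu0, applyX_ne_zero_of_mem_ripSet hδ hδ1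
      ((Finset.card_le_card hu).trans (hβ.trans s.le_succ)) hu0⟩
  have hev : ∀ᶠ ε in 𝓝[>] 0, RecoveryMargin X β ε := by
    refine (eventually_all_finset _).2 fun A hA => nhdsWithin_le_nhds ?_
    obtain ⟨hlead, hne⟩ := hleads A hA
    have hsmall : Tendsto (fun ε : ℝ => 2 * ε) (𝓝 0) (𝓝 0) := by
      simpa using (continuous_const_mul (2 : ℝ)).tendsto 0
    filter_upwards [eventually_closedBall_subset ((isOpen_setOf_supportLeads X _).mem_nhds hlead),
      hsmall.eventually (gt_mem_nhds (norm_pos_iff.2 hne))] with ε hball hlt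
    refine ⟨fun e he => hball ?_, hlt⟩
    rwa [Metric.mem_closedBall, dist_eq_norm, add_sub_cancel_left]
  exact (hev.and self_mem_nhdsWithin).exists.imp fun ε h => ⟨h.2, h.1⟩

lemma IsOMP.mem_of_supportLeads {y : EuclideanSpace ℝ (Fin n)} {t : ℕ → Fin p} {k : ℕ}
    {S : Finset (Fin p)} (ht : IsOMP X y t) (h : SupportLeads X S (ompResidual X y t k)) :
    t k ∈ S ∧ t k ∉ ompSupport t k := by
  obtain ⟨i, -, hpos, hlt⟩ := h
  have hmax := ht k i
  refine ⟨not_not.1 fun hk => (hlt _ hk).not_ge hmax, fun hk => ?_⟩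
  rw [ompResidual_eq_residual, inner_residual_eq_zero hk, abs_zero] at hmax
  exact hpos.not_ge (ompResidual_eq_residual X y t k ▸ hmax)

lemma mem_ssubsets_of_subset_of_card_lt {α : Type*} [DecidableEq α] {A S : Finset α}
    (hAS : A ⊆ S) (hcard : A.card < S.card) : A ∈ S.ssubsets :=
  Finset.mem_ssubsets.2 (hAS.ssubset_of_ne fun h => hcard.ne (congrArg Finset.card h))

lemma ompSupport_succ (t : ℕ → Fin p) (k : ℕ) :
    ompSupport t (k + 1) = insert (t k) (ompSupport t k) := by
  rw [ompSupport, Finset.range_add_one, Finset.image_insert, ompSupport]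

lemma RecoveryMargin.ompSupport_subset {ε : ℝ} (hε : RecoveryMargin X β ε)
    {w : EuclideanSpace ℝ (Fin n)} {t : ℕ → Fin p} (ht : IsOMP X (applyX X β + w) t)
    (hw : ‖w‖ ≤ ε) {k : ℕ} (hk : k ≤ (suppF β).card) :
    ompSupport t k ⊆ suppF β ∧ (ompSupport t k).card = k := by
  induction k with
  | zero => simp [ompSupport]
  | succ k ih =>
    obtain ⟨hsub, hcard⟩ := ih (by omega)
    have hA := mem_ssubsets_of_subset_of_card_lt hsub (hcard.trans_lt hk)
    have hleads : SupportLeads X (suppF β) (ompResidual X (applyX X β + w) t k) := by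
      rw [ompResidual_eq_residual, map_add]
      exact (hε _ hA).1 _ ((norm_residual_le _ _).trans hw)
    obtain ⟨hin, hnew⟩ := ht.mem_of_supportLeads hleads
    rw [ompSupport_succ, Finset.card_insert_of_notMem hnew, hcard]
    exact ⟨Finset.insert_subset hin hsub, rfl⟩

lemma stoppedIter_eq {r : ℕ → ℝ} {c : ℝ} {n k : ℕ} (hk : k ≤ n) (hrk : r k ≤ c)
    (hlt : ∀ i < k, c < r i) : stoppedIter r c n = k := by
  have hne : {i | i ≤ n ∧ r i ≤ c}.Nonempty := ⟨k, hk, hrk⟩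
  rw [stoppedIter, if_pos hne]
  refine le_antisymm (Nat.sInf_le ⟨hk, hrk⟩) (not_lt.1 fun h => ?_)
  exact (hlt _ h).not_ge (Nat.sInf_mem hne).2

theorem RecoveryMargin.ompSupport_stoppedIter {ε τ : ℝ} (hε : RecoveryMargin X β ε)
    (hn : (suppF β).card ≤ n) {w : EuclideanSpace ℝ (Fin n)} {t : ℕ → Fin p}
    (ht : IsOMP X (applyX X β + w) t) (hwτ : ‖w‖ ≤ τ) (hτ : τ < ε) :
    ompSupport t (stoppedIter (fun k => ‖ompResidual X (applyX X β + w) t k‖) τ n) =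
      suppF β := by
  have hsupp : ∀ k ≤ (suppF β).card, ompSupport t k ⊆ suppF β ∧ (ompSupport t k).card = k :=
    fun _ hk => hε.ompSupport_subset ht (hwτ.trans hτ.le) hk
  obtain ⟨hsub, hcard⟩ := hsupp _ le_rfl
  have hfull := Finset.eq_of_subset_of_card_le hsub hcard.ge
  rw [stoppedIter_eq hn ?_ ?_, hfull]
  · rw [ompResidual_eq_residual, hfull, map_add, residual_applyX_suppF, zero_add]
    exact (norm_residual_le _ _).trans hwτ
  · intro k hk
    obtain ⟨hsubk, hcardk⟩ := hsupp k hk.le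
    have hfar := (hε _ (mem_ssubsets_of_subset_of_card_lt hsubk (hcardk.trans_lt hk))).2
    have hrev := norm_sub_norm_le (residual X (ompSupport t k) (applyX X β))
      (-residual X (ompSupport t k) w)
    rw [norm_neg, sub_neg_eq_add] at hrev
    rw [ompResidual_eq_residual, map_add]
    linarith [norm_residual_le (X := X) (ompSupport t k) w]

end OMP

section Noise

variable {n : ℕ}

lemma noise_eq_map_pi (σ : ℝ) : noise n σ = (Measure.pi fun _ : Fin n =>
    gaussianReal 0 (σ ^ 2).toNNReal).map (MeasurableEquiv.toLp 2 (Fin n → ℝ)) := by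
  rw [noise, Real.toNNReal_of_nonneg (sq_nonneg σ)]
  rfl

instance (σ : ℝ) : IsProbabilityMeasure (noise n σ) := by
  rw [noise_eq_map_pi]
  exact Measure.isProbabilityMeasure_map (MeasurableEquiv.measurable _).aemeasurable

lemma noise_eq_map_smul (σ : ℝ) : noise n σ = (noise n 1).map (σ • ·) := by
  have hgauss : gaussianReal 0 (σ ^ 2).toNNReal =
      (gaussianReal 0 ((1 : ℝ) ^ 2).toNNReal).map (σ * ·) := by
    rw [gaussianReal_map_const_mul, mul_zero]
    congr 1
    ext
    simp [sq_nonneg]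
  rw [noise_eq_map_pi, noise_eq_map_pi,
    Measure.map_map (by fun_prop) (MeasurableEquiv.measurable _), hgauss,
    ← Measure.pi_map_pi (fun _ => (measurable_const_mul σ).aemeasurable),
    Measure.map_map (MeasurableEquiv.measurable _) (by fun_prop)]
  rfl

lemma noise_norm_gt_mul {σ : ℝ} (hσ : 0 < σ) (M : ℝ) :
    noise n σ {w | σ * M < ‖w‖} = noise n 1 {z | M < ‖z‖} := by
  rw [noise_eq_map_smul, Measure.map_apply (measurable_const_smul σ)
    (measurableSet_lt measurable_const measurable_norm)]
  congr 1
  ext z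
  simp [norm_smul, abs_of_pos hσ, mul_lt_mul_iff_right₀ hσ]

lemma tendsto_noise_norm_gt {M : ℝ → ℝ} (hM : Tendsto M (𝓝[>] 0) atTop) :
    Tendsto (fun σ => noise n σ {w | σ * M σ < ‖w‖}) (𝓝[>] 0) (𝓝 0) := by
  have htail : Tendsto (fun r : ℝ => noise n 1 {z | r < ‖z‖}) atTop (𝓝 0) := by
    simpa using tendsto_measure_norm_gt_of_isTightMeasureSet
      (isTightMeasureSet_singleton (μ := noise n 1))
  refine (htail.comp hM).congr' ?_
  filter_upwards [self_mem_nhdsWithin] with σ hσ using (noise_norm_gt_mul hσ _).symm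

end Noise

lemma tendsto_measure_toReal_of_compl_subset {Ω ι : Type*} [MeasurableSpace Ω] {l : Filter ι}
    {μ : ι → Measure Ω} [∀ i, IsProbabilityMeasure (μ i)] {E B : ι → Set Ω}
    (hB : ∀ i, MeasurableSet (B i)) (hBE : ∀ᶠ i in l, (B i)ᶜ ⊆ E i)
    (hB0 : Tendsto (fun i => μ i (B i)) l (𝓝 0)) :
    Tendsto (fun i => (μ i (E i)).toReal) l (𝓝 1) := by
  have hlow : Tendsto (fun i => 1 - (μ i (B i)).toReal) l (𝓝 1) := by
    simpa using tendsto_const_nhds.sub ((ENNReal.tendsto_toReal ENNReal.zero_ne_top).comp hB0)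
  refine tendsto_of_tendsto_of_tendsto_of_le_of_le' hlow tendsto_const_nhds ?_
    (Eventually.of_forall fun i => measureReal_le_one)
  filter_upwards [hBE] with i hi
  change 1 - (μ i).real (B i) ≤ (μ i).real (E i)
  rw [← probReal_compl_eq_one_sub (hB i)]
  exact measureReal_mono hi

lemma sq_mul_lt_one_of_lt_one_div_sqrt {δ x : ℝ} (hδ : 0 ≤ δ) (hx : 0 < x)
    (h : δ < 1 / Real.sqrt x) : δ ^ 2 * x < 1 :=
  calc δ ^ 2 * x = (δ * Real.sqrt x) ^ 2 := by rw [mul_pow, Real.sq_sqrt hx.le]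
    _ < 1 := pow_lt_one₀ (mul_nonneg hδ (Real.sqrt_nonneg _))
      ((lt_div_iff₀ (Real.sqrt_pos.2 hx)).1 h) two_ne_zero

theorem statement_3_general {n p k0 : ℕ}
    (X : Fin p → EuclideanSpace ℝ (Fin n)) (hX : ∀ j, ‖X j‖ = 1)
    (β : Fin p → ℝ) (hβ : (suppF β).card = k0)
    (T : EuclideanSpace ℝ (Fin n) → ℕ → Fin p)
    (hT : ∀ w, IsOMP X (applyX X β + w) (T w))
    (hRIC : RIC X (k0 + 1) < 1 / Real.sqrt ((k0 : ℝ) + 1))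
    (g : ℝ → ℝ)
    (hg1 : Filter.Tendsto g (nhdsWithin 0 (Set.Ioi 0)) Filter.atTop)
    (hg2 : Filter.Tendsto (fun σ : ℝ => σ * g σ) (nhdsWithin 0 (Set.Ioi 0)) (nhds 0)) :
    Filter.Tendsto
      (fun σ : ℝ => (noise n σ {w | ompSupport (T w)
          (stoppedIter (fun k => ‖ompResidual X (applyX X β + w) (T w) k‖) (σ * g σ) n)
        = suppF β}).toReal)
      (nhdsWithin 0 (Set.Ioi 0)) (nhds 1) := by
  have hδ := RIC_mem_ripSet X (k0 + 1)
  have hδs := sq_mul_lt_one_of_lt_one_div_sqrt hδ.1 (by positivity) hRIC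
  have hδ1 : RIC X (k0 + 1) < 1 := by nlinarith [hδ.1]
  obtain ⟨ε, hε, hmargin⟩ := exists_recoveryMargin hX hδ hδs hβ.le
  have hn := card_le_of_mem_ripSet hδ hδ1 (hβ.le.trans k0.le_succ)
  refine tendsto_measure_toReal_of_compl_subset (μ := noise n)
    (fun σ => measurableSet_lt measurable_const measurable_norm) ?_ (tendsto_noise_norm_gt hg1)
  filter_upwards [hg2.eventually (gt_mem_nhds hε)] with σ hσ w hw
  exact hmargin.ompSupport_stoppedIter hn (hT w) (not_lt.1 hw) hσ

/-- If `δ_{k0+1} < 1/√(k0+1)` and `g` satisfies `g(σ) → ∞` and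
`σ g(σ) → 0` as `σ → 0⁺`, then OMP with the stopping rule `‖r^k‖₂ ≤ σ g(σ)` is
high SNR consistent. -/
theorem statement_3 {n p k0 : ℕ} (hnp : n < p) (hk0 : 1 ≤ k0)
    (X : Fin p → EuclideanSpace ℝ (Fin n)) (hX : ∀ j, ‖X j‖ = 1)
    (β : Fin p → ℝ) (hβ : (suppF β).card = k0)
    (T : EuclideanSpace ℝ (Fin n) → ℕ → Fin p)
    (hT : ∀ w, IsOMP X (applyX X β + w) (T w))
    (hRIC : RIC X (k0 + 1) < 1 / Real.sqrt ((k0 : ℝ) + 1))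
    (g : ℝ → ℝ) (hgpos : ∀ σ : ℝ, 0 < σ → 0 < g σ)
    (hg1 : Filter.Tendsto g (nhdsWithin 0 (Set.Ioi 0)) Filter.atTop)
    (hg2 : Filter.Tendsto (fun σ : ℝ => σ * g σ) (nhdsWithin 0 (Set.Ioi 0)) (nhds 0)) :
    Filter.Tendsto
      (fun σ : ℝ => (noise n σ {w | ompSupport (T w)
          (stoppedIter (fun k => ‖ompResidual X (applyX X β + w) (T w) k‖) (σ * g σ) n)
        = suppF β}).toReal)
      (nhdsWithin 0 (Set.Ioi 0)) (nhds 1) :=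
  statement_3_general X hX β hβ T hT hRIC g hg1 hg2

end RRTPaper
end
end

section
/- Fix integers n > k0 ≥ 1, p ≥ k0, and 1 ≤ k_max ≤ p. Let f : (0,∞) → (0,1) be a function with lim_{x→0⁺} f(x) = 0 and lim_{x→0⁺} f(x)^{2/(n−k0)} / x² = ∞. Then lim_{x→0⁺} Γ_RRT^{f(x)}(k0) / x = ∞, where Γ_RRT^{f(x)}(k0) = sqrt( F⁻¹_{(n−k0)/2, 1/2}( f(x)/(k_max(p−k0+1)) ) ). -/
open MeasureTheory ProbabilityTheory Filter
open scoped ENNReal NNReal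

noncomputable section

namespace RRTPaper

variable {n p : ℕ}

/-! On `[0, 1/2]` the Beta(a, b) density with `b ≤ 1` is at most `(1/2)^(b-1) u^(a-1)`, so the CDF
is at most `C x^a` there and its inverse at `z ≤ 1` is at least `min (1/2) ((z/C)^(1/a))`. With
`a = (n - k0)/2` this bounds `Γ_RRT^{f(x)}(k0)^2 / x^2` below by the minimum of `1/(2x^2)` and a
constant multiple of `f(x)^{2/(n-k0)} / x^2`, and both tend to infinity. -/

open Topology

lemma betaFun_pos {a b : ℝ} (ha : 0 < a) (hb : 0 < b) : 0 < betaFun a b :=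
  beta_pos ha hb

lemma integral_rpow_mul_one_sub_rpow {a b : ℝ} (ha : 0 < a) (hb : 0 < b) :
    ∫ u in (0:ℝ)..1, u ^ (a - 1) * (1 - u) ^ (b - 1) = betaFun a b := by
  have hcomplex : Complex.betaIntegral a b =
      ((∫ u in (0:ℝ)..1, u ^ (a - 1) * (1 - u) ^ (b - 1) : ℝ) : ℂ) := by
    rw [Complex.betaIntegral, ← intervalIntegral.integral_ofReal]
    refine intervalIntegral.integral_congr fun u hu => ?_
    rw [Set.uIcc_of_le zero_le_one] at hu
    simp only [Complex.ofReal_mul, Complex.ofReal_cpow hu.1,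
      Complex.ofReal_cpow (sub_nonneg.2 hu.2)]
    push_cast
    rfl
  rw [show betaFun a b = beta a b from rfl, beta_eq_betaIntegralReal a b ha hb, hcomplex,
    Complex.ofReal_re]

lemma betaCDF_one {a b : ℝ} (ha : 0 < a) (hb : 0 < b) : betaCDF a b 1 = 1 := by
  rw [betaCDF, integral_rpow_mul_one_sub_rpow ha hb, one_div_mul_cancel (betaFun_pos ha hb).ne']

lemma betaCDF_le_mul_rpow {a b x : ℝ} (ha : 0 < a) (hb : 0 < b) (hb1 : b ≤ 1)
    (hx0 : 0 ≤ x) (hx : x ≤ 1 / 2) :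
    betaCDF a b x ≤ (1 / 2) ^ (b - 1) / (a * betaFun a b) * x ^ a := by
  have hpow : IntervalIntegrable (fun u : ℝ => u ^ (a - 1)) volume 0 x :=
    intervalIntegral.intervalIntegrable_rpow' (by linarith)
  have hcont : ContinuousOn (fun u : ℝ => (1 - u) ^ (b - 1)) (Set.uIcc 0 x) := by
    rw [Set.uIcc_of_le hx0]
    exact ContinuousOn.rpow_const (by fun_prop) fun u hu => Or.inl (by linarith [hu.2])
  have hbound : ∫ u in (0:ℝ)..x, u ^ (a - 1) * (1 - u) ^ (b - 1) ≤
      ∫ u in (0:ℝ)..x, u ^ (a - 1) * (1 / 2) ^ (b - 1) := by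
    refine intervalIntegral.integral_mono_on hx0 (hpow.mul_continuousOn hcont)
      (hpow.mul_const _) fun u hu => ?_
    exact mul_le_mul_of_nonneg_left
      (Real.rpow_le_rpow_of_nonpos one_half_pos (by linarith [hu.2]) (by linarith))
      (Real.rpow_nonneg hu.1 _)
  have hexplicit : ∫ u in (0:ℝ)..x, u ^ (a - 1) * (1 / 2) ^ (b - 1) =
      (1 / 2) ^ (b - 1) * (x ^ a / a) := by
    rw [intervalIntegral.integral_mul_const, integral_rpow (Or.inl (by linarith)),
      sub_add_cancel, Real.zero_rpow ha.ne', sub_zero, mul_comm]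
  calc betaCDF a b x ≤ 1 / betaFun a b * ((1 / 2) ^ (b - 1) * (x ^ a / a)) :=
        mul_le_mul_of_nonneg_left (hexplicit ▸ hbound) (by have := betaFun_pos ha hb; positivity)
    _ = (1 / 2) ^ (b - 1) / (a * betaFun a b) * x ^ a := by
        field_simp

lemma exists_min_rpow_le_betaICDF {a b : ℝ} (ha : 0 < a) (hb : 0 < b) (hb1 : b ≤ 1) :
    ∃ C > 0, ∀ z, 0 ≤ z → z ≤ 1 → min (1 / 2) ((z / C) ^ (1 / a)) ≤ betaICDF a b z := by
  set C : ℝ := (1 / 2) ^ (b - 1) / (a * betaFun a b)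
  have hC : 0 < C := by
    have := betaFun_pos ha hb; positivity
  refine ⟨C, hC, fun z hz0 hz1 => le_csInf ⟨1, zero_le_one, by rwa [betaCDF_one ha hb]⟩ ?_⟩
  rintro x ⟨hx0, hzx⟩
  rcases le_or_gt (1 / 2) x with hx | hx
  · exact (min_le_left _ _).trans hx
  refine (min_le_right _ _).trans ?_
  have hzC : z / C ≤ x ^ a := by
    rw [div_le_iff₀ hC, mul_comm]
    exact hzx.trans (betaCDF_le_mul_rpow ha hb hb1 hx0 hx.le)
  calc (z / C) ^ (1 / a) ≤ (x ^ a) ^ (1 / a) :=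
        Real.rpow_le_rpow (div_nonneg hz0 hC.le) hzC (by positivity)
    _ = x := by rw [← Real.rpow_mul hx0, mul_one_div_cancel ha.ne', Real.rpow_one]

lemma tendsto_const_div_sq_nhdsGT_zero {c : ℝ} (hc : 0 < c) :
    Tendsto (fun x : ℝ => c / x ^ 2) (𝓝[>] 0) atTop := by
  have hinv := tendsto_inv_nhdsGT_zero (𝕜 := ℝ)
  refine ((hinv.atTop_mul_atTop₀ hinv).const_mul_atTop hc).congr fun x => ?_
  rw [div_eq_mul_inv, sq, mul_inv]

lemma tendsto_sqrt_betaICDF_div_atTop {a b : ℝ} (ha : 0 < a) (hb : 0 < b) (hb1 : b ≤ 1)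
    {z : ℝ → ℝ} (hz : ∀ᶠ x in 𝓝[>] 0, 0 ≤ z x ∧ z x ≤ 1)
    (hzx : Tendsto (fun x => z x ^ (1 / a) / x ^ 2) (𝓝[>] 0) atTop) :
    Tendsto (fun x => √(betaICDF a b (z x)) / x) (𝓝[>] 0) atTop := by
  obtain ⟨C, hC, hICDF⟩ := exists_min_rpow_le_betaICDF ha hb hb1
  have hsmall : Tendsto (fun x => (z x / C) ^ (1 / a) / x ^ 2) (𝓝[>] 0) atTop := by
    refine (hzx.atTop_div_const (Real.rpow_pos_of_pos hC (1 / a))).congr' ?_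
    filter_upwards [hz] with x hzbound
    rw [Real.div_rpow hzbound.1 hC.le, div_div, div_div, mul_comm]
  have hmin : Tendsto (fun x => min (1 / 2) ((z x / C) ^ (1 / a)) / x ^ 2) (𝓝[>] 0) atTop := by
    refine tendsto_atTop.2 fun M => ?_
    filter_upwards [tendsto_atTop.1 (tendsto_const_div_sq_nhdsGT_zero one_half_pos) M,
      tendsto_atTop.1 hsmall M] with x h1 h2
    rw [← min_div_div_right (sq_nonneg x)]
    exact le_min h1 h2
  have hICDF_div : Tendsto (fun x => betaICDF a b (z x) / x ^ 2) (𝓝[>] 0) atTop := by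
    refine tendsto_atTop_mono' _ ?_ hmin
    filter_upwards [hz] with x hzbound
    exact div_le_div_of_nonneg_right (hICDF _ hzbound.1 hzbound.2) (sq_nonneg x)
  refine (Real.tendsto_sqrt_atTop.comp hICDF_div).congr' ?_
  filter_upwards [self_mem_nhdsWithin] with x (hx : 0 < x)
  rw [Function.comp_apply, Real.sqrt_div' _ (sq_nonneg x), Real.sqrt_sq hx.le]

theorem statement_13_general (n p k0 kmax : ℕ) (hn : k0 < n) (hp : k0 ≤ p)
    (hkmax1 : 1 ≤ kmax)
    (f : ℝ → ℝ) (hf : ∀ x : ℝ, 0 < x → 0 < f x ∧ f x < 1)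
    (hfx : Filter.Tendsto
      (fun x : ℝ => f x ^ ((2 : ℝ) / ((n : ℝ) - (k0 : ℝ))) / x ^ 2)
      (nhdsWithin 0 (Set.Ioi 0)) Filter.atTop) :
    Filter.Tendsto (fun x : ℝ => GammaRRT n p kmax (f x) k0 / x)
      (nhdsWithin 0 (Set.Ioi 0)) Filter.atTop := by
  have ha : 0 < ((n : ℝ) - k0) / 2 := by
    have : (k0 : ℝ) < n := by exact_mod_cast hn
    linarith
  have hK : 1 ≤ (kmax : ℝ) * ((p : ℝ) - k0 + 1) := by
    have : (1 : ℝ) ≤ kmax := by exact_mod_cast hkmax1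
    have : (k0 : ℝ) ≤ p := by exact_mod_cast hp
    nlinarith
  have hK0 : 0 < (kmax : ℝ) * ((p : ℝ) - k0 + 1) := one_pos.trans_le hK
  refine tendsto_sqrt_betaICDF_div_atTop ha one_half_pos one_half_lt_one.le ?_ ?_
  · filter_upwards [self_mem_nhdsWithin] with x hx
    obtain ⟨hfx0, hfx1⟩ := hf x hx
    exact ⟨by positivity, (div_le_one hK0).2 (by linarith)⟩
  · refine (hfx.atTop_div_const (Real.rpow_pos_of_pos hK0 (2 / ((n : ℝ) - k0)))).congr' ?_
    filter_upwards [self_mem_nhdsWithin] with x hx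
    rw [one_div_div, Real.div_rpow (hf x hx).1.le hK0.le, div_div, div_div, mul_comm]

/-- Fix integers `n > k0 ≥ 1`, `p ≥ k0` and `1 ≤ k_max ≤ p`. If
`f : (0,∞) → (0,1)` satisfies `f(x) → 0` and `f(x)^{2/(n−k0)}/x² → ∞` as `x → 0⁺`, then
`Γ_RRT^{f(x)}(k0)/x → ∞` as `x → 0⁺`. -/
theorem statement_13 (n p k0 kmax : ℕ) (hk0 : 1 ≤ k0) (hn : k0 < n) (hp : k0 ≤ p)
    (hkmax1 : 1 ≤ kmax) (hkmaxp : kmax ≤ p)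
    (f : ℝ → ℝ) (hf : ∀ x : ℝ, 0 < x → 0 < f x ∧ f x < 1)
    (hf0 : Filter.Tendsto f (nhdsWithin 0 (Set.Ioi 0)) (nhds 0))
    (hfx : Filter.Tendsto
      (fun x : ℝ => f x ^ ((2 : ℝ) / ((n : ℝ) - (k0 : ℝ))) / x ^ 2)
      (nhdsWithin 0 (Set.Ioi 0)) Filter.atTop) :
    Filter.Tendsto (fun x : ℝ => GammaRRT n p kmax (f x) k0 / x)
      (nhdsWithin 0 (Set.Ioi 0)) Filter.atTop :=
  statement_13_general n p k0 kmax hn hp hkmax1 f hf hfx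

end RRTPaper
end
end
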